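/- Kinetic-energy dissipation of the discrete momentum step (inequalities (3.17)–(3.21) of the paper, combined). Fix d ≥ 1 and δt > 0. Let ρ, ρ' : ℝ^d → ℝ be smooth, compactly supported and nonnegative, let G : ℝ^d → ℝ^d be a smooth compactly supported vector field with ρ' − ρ = −δt ∇·G on ℝ^d, let u : ℝ^d → ℝ^d be smooth and compactly supported, let v : ℝ^d → ℝ^d be smooth, and let λ, η : ℝ^d → ℝ be smooth and nonnegative. Assume ρ (u − v)/δt + (G·∇)u = ∇(λ ∇·u) + ∇·(η (∇u + (∇u)ᵀ)) on ℝ^d. Then ½ ∫ ρ' |u|² dx − ½ ∫ ρ |v|² dx ≤ −δt ∫ λ (∇·u)² dx − (δt/2) ∫ η ‖∇u + (∇u)ᵀ‖_F² dx. -/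

import Mathlib

open MeasureTheory Matrix

noncomputable section

/-- points of `ℝ^d` -/
abbrev Vec (d : ℕ) := Fin d → ℝ

/-- partial derivative of a scalar field in coordinate direction `i` -/
def pd {d : ℕ} (i : Fin d) (f : Vec d → ℝ) : Vec d → ℝ :=
  fun x => fderiv ℝ f x (Pi.single i 1)

/-- gradient of a scalar field -/
def gradf {d : ℕ} (f : Vec d → ℝ) : Vec d → Vec d :=
  fun x i => pd i f x

/-- divergence `∇·F = ∑ₖ ∂Fₖ/∂xₖ` of a vector field -/
def divv {d : ℕ} (F : Vec d → Vec d) : Vec d → ℝ :=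
  fun x => ∑ i, fderiv ℝ F x (Pi.single i 1) i

/-- Laplacian of a scalar field -/
def lapf {d : ℕ} (f : Vec d → ℝ) : Vec d → ℝ :=
  fun x => ∑ i, pd i (pd i f) x

/-- Jacobian matrix `(∂uᵢ/∂xⱼ)` of a vector field -/
def jac {d : ℕ} (u : Vec d → Vec d) : Vec d → Matrix (Fin d) (Fin d) ℝ :=
  fun x i j => fderiv ℝ u x (Pi.single j 1) i

/-- row-wise divergence of a matrix-valued field: `(∇·A)ᵢ = ∑ₖ ∂Aᵢₖ/∂xₖ` -/
def matdiv {d : ℕ} (A : Vec d → Matrix (Fin d) (Fin d) ℝ) : Vec d → Vec d :=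
  fun x i => ∑ k, fderiv ℝ (fun y => A y i k) x (Pi.single k 1)

/-- Euclidean dot product on `ℝ^d` -/
def dot {d : ℕ} (a b : Vec d) : ℝ := ∑ i, a i * b i

/-- squared Frobenius norm of a real matrix -/
def frob2 {d : ℕ} (A : Matrix (Fin d) (Fin d) ℝ) : ℝ := ∑ i, ∑ j, (A i j)^2

variable {d : ℕ}

lemma pd_contDiff {f : Vec d → ℝ} (hf : ContDiff ℝ (⊤ : ℕ∞) f) (i : Fin d) :
    ContDiff ℝ (⊤ : ℕ∞) (pd i f) :=
  (hf.fderiv_right (by simp)).clm_apply contDiff_const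

lemma pd_hcs {f : Vec d → ℝ} (hf : HasCompactSupport f) (i : Fin d) :
    HasCompactSupport (pd i f) :=
  hf.fderiv_apply ℝ (Pi.single i 1)

lemma integ {f : Vec d → ℝ} (hc : Continuous f) (hs : HasCompactSupport f) :
    Integrable f (volume : Measure (Vec d)) :=
  hc.integrable_of_hasCompactSupport hs

/-- integration by parts: `∫ f * ∂ᵢg = -∫ ∂ᵢf * g` when `f` has compact support. -/
lemma ibp {f g : Vec d → ℝ} (hf : ContDiff ℝ (⊤ : ℕ∞) f) (hg : ContDiff ℝ (⊤ : ℕ∞) g)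
    (hfs : HasCompactSupport f) (i : Fin d) :
    ∫ x : Vec d, f x * pd i g x = -∫ x : Vec d, pd i f x * g x := by
  apply integral_mul_fderiv_eq_neg_fderiv_mul_of_integrable
  · exact integ ((pd_contDiff hf i).continuous.mul hg.continuous) ((pd_hcs hfs i).mul_right)
  · exact integ (hf.continuous.mul (pd_contDiff hg i).continuous) (hfs.mul_right)
  · exact integ (hf.continuous.mul hg.continuous) (hfs.mul_right)
  · exact fun x _ => hf.differentiable (by simp) x
  · exact fun x _ => hg.differentiable (by simp) x


lemma comp_contDiff {u : Vec d → Vec d} (hu : ContDiff ℝ (⊤ : ℕ∞) u) (i : Fin d) :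
    ContDiff ℝ (⊤ : ℕ∞) (fun x => u x i) :=
  (ContinuousLinearMap.proj (R := ℝ) (φ := fun _ : Fin d => ℝ) i).contDiff.comp hu

lemma comp_hcs {u : Vec d → Vec d} (h : HasCompactSupport u) (i : Fin d) :
    HasCompactSupport (fun x => u x i) := h.comp_left (g := fun y : Vec d => y i) rfl

lemma fderiv_comp_apply {u : Vec d → Vec d} (hu : ContDiff ℝ (⊤ : ℕ∞) u) (x w : Vec d) (i : Fin d) :
    fderiv ℝ u x w i = fderiv ℝ (fun y => u y i) x w := by
  have h : ∀ j : Fin d, DifferentiableAt ℝ (fun y => u y j) x :=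
    fun j => ((comp_contDiff hu j).differentiable (by simp)) x
  have := fderiv_pi (𝕜 := ℝ) (φ := fun i y => u y i) (x := x) h
  rw [show (fun (y : Vec d) (i : Fin d) => u y i) = u from rfl] at this
  rw [this]; rfl

lemma jac_eq {u : Vec d → Vec d} (hu : ContDiff ℝ (⊤ : ℕ∞) u) (x : Vec d) (i j : Fin d) :
    jac u x i j = pd j (fun y => u y i) x := fderiv_comp_apply hu x _ i

lemma divv_eq {u : Vec d → Vec d} (hu : ContDiff ℝ (⊤ : ℕ∞) u) (x : Vec d) :
    divv u x = ∑ i, pd i (fun y => u y i) x :=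
  Finset.sum_congr rfl fun i _ => fderiv_comp_apply hu x _ i

lemma vec_pd_contDiff {u : Vec d → Vec d} (hu : ContDiff ℝ (⊤ : ℕ∞) u) (w : Vec d) (i : Fin d) :
    ContDiff ℝ (⊤ : ℕ∞) (fun x => fderiv ℝ u x w i) :=
  comp_contDiff ((hu.fderiv_right (by simp)).clm_apply contDiff_const) i

lemma vec_pd_hcs {u : Vec d → Vec d} (hu : HasCompactSupport u) (w : Vec d) (i : Fin d) :
    HasCompactSupport (fun x => fderiv ℝ u x w i) :=
  (hu.fderiv_apply ℝ w).comp_left (g := fun y : Vec d => y i) rfl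

lemma divv_contDiff {u : Vec d → Vec d} (hu : ContDiff ℝ (⊤ : ℕ∞) u) :
    ContDiff ℝ (⊤ : ℕ∞) (divv u) := ContDiff.sum fun i _ => vec_pd_contDiff hu _ i

lemma hcs_sum {ι : Type*} (s : Finset ι) (f : ι → Vec d → ℝ)
    (h : ∀ i ∈ s, HasCompactSupport (f i)) :
    HasCompactSupport (fun x => ∑ i ∈ s, f i x) := by
  classical
  induction s using Finset.induction_on with
  | empty => simpa [HasCompactSupport] using HasCompactSupport.zero (α := Vec d) (β := ℝ)
  | @insert a s hnot ih =>
    simp only [Finset.sum_insert hnot]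
    exact (h a (Finset.mem_insert_self a s)).add
      (ih fun i hi => h i (Finset.mem_insert_of_mem hi))

lemma divv_hcs {u : Vec d → Vec d} (hu : HasCompactSupport u) :
    HasCompactSupport (divv u) :=
  hcs_sum Finset.univ _ fun i _ => vec_pd_hcs hu _ i

lemma jac_entry_contDiff {u : Vec d → Vec d} (hu : ContDiff ℝ (⊤ : ℕ∞) u) (i j : Fin d) :
    ContDiff ℝ (⊤ : ℕ∞) (fun x => jac u x i j) := vec_pd_contDiff hu _ i

lemma jac_entry_hcs {u : Vec d → Vec d} (hu : HasCompactSupport u) (i j : Fin d) :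
    HasCompactSupport (fun x => jac u x i j) := vec_pd_hcs hu _ i


lemma pd_dot_self {u : Vec d → Vec d} (hu : ContDiff ℝ (⊤ : ℕ∞) u) (k : Fin d) (x : Vec d) :
    pd k (fun y => dot (u y) (u y)) x = ∑ i, 2 * u x i * pd k (fun y => u y i) x := by
  have hdi : ∀ i : Fin d, DifferentiableAt ℝ (fun y => u y i) x :=
    fun i => ((comp_contDiff hu i).differentiable (by simp)) x
  have h1 : fderiv ℝ (fun y => ∑ i, u y i * u y i) x
      = ∑ i, fderiv ℝ (fun y => u y i * u y i) x :=
    fderiv_fun_sum (fun i _ => (hdi i).mul (hdi i))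
  simp only [pd, dot]
  rw [h1, ContinuousLinearMap.sum_apply]
  refine Finset.sum_congr rfl fun i _ => ?_
  rw [fderiv_fun_mul (hdi i) (hdi i)]
  simp only [ContinuousLinearMap.add_apply, ContinuousLinearMap.smul_apply, smul_eq_mul]
  ring

lemma frob_sym (J : Matrix (Fin d) (Fin d) ℝ) :
    ∑ i, ∑ k, (J i k + J k i) * J i k = (1/2) * ∑ i, ∑ k, (J i k + J k i)^2 := by
  have h1 : ∑ i, ∑ k, J i k * J i k = ∑ i, ∑ k, J k i * J k i := Finset.sum_comm
  have h2 : ∑ i, ∑ k, J i k * J k i = ∑ i, ∑ k, J k i * J i k := Finset.sum_comm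
  have e1 : ∑ i, ∑ k, (J i k + J k i) * J i k
      = (∑ i, ∑ k, J i k * J i k) + ∑ i, ∑ k, J k i * J i k := by
    rw [← Finset.sum_add_distrib]
    refine Finset.sum_congr rfl fun i _ => ?_
    rw [← Finset.sum_add_distrib]
    exact Finset.sum_congr rfl fun k _ => by ring
  have e2 : ∑ i, ∑ k, (J i k + J k i)^2
      = (∑ i, ∑ k, J i k * J i k) + 2 * (∑ i, ∑ k, J i k * J k i)
        + ∑ i, ∑ k, J k i * J k i := by
    rw [Finset.mul_sum, ← Finset.sum_add_distrib, ← Finset.sum_add_distrib]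
    refine Finset.sum_congr rfl fun i _ => ?_
    rw [Finset.mul_sum, ← Finset.sum_add_distrib, ← Finset.sum_add_distrib]
    exact Finset.sum_congr rfl fun k _ => by ring
  rw [e1, e2]; linarith


lemma grad_term {u : Vec d → Vec d} (hu : ContDiff ℝ (⊤ : ℕ∞) u)
    {φ : Vec d → ℝ} (hφ : ContDiff ℝ (⊤ : ℕ∞) φ) (hφs : HasCompactSupport φ) :
    ∫ x : Vec d, dot (gradf φ x) (u x) = -∫ x : Vec d, φ x * divv u x := by
  have hint1 : ∀ i : Fin d, Integrable (fun x : Vec d => pd i φ x * u x i) :=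
    fun i => integ ((pd_contDiff hφ i).continuous.mul (comp_contDiff hu i).continuous)
      ((pd_hcs hφs i).mul_right)
  have hint2 : ∀ i : Fin d, Integrable (fun x : Vec d => φ x * pd i (fun y => u y i) x) :=
    fun i => integ (hφ.continuous.mul (pd_contDiff (comp_contDiff hu i) i).continuous)
      hφs.mul_right
  calc ∫ x : Vec d, dot (gradf φ x) (u x)
      = ∑ i, ∫ x : Vec d, pd i φ x * u x i := integral_finset_sum _ (fun i _ => hint1 i)
    _ = ∑ i, -∫ x : Vec d, φ x * pd i (fun y => u y i) x := by
        refine Finset.sum_congr rfl fun i _ => ?_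
        have h := ibp hφ (comp_contDiff hu i) hφs i
        linarith
    _ = -∑ i, ∫ x : Vec d, φ x * pd i (fun y => u y i) x := by rw [← Finset.sum_neg_distrib]
    _ = -∫ x : Vec d, ∑ i, φ x * pd i (fun y => u y i) x := by
        rw [integral_finset_sum _ (fun i _ => hint2 i)]
    _ = -∫ x : Vec d, φ x * divv u x := by
        congr 1; refine integral_congr_ae (Filter.Eventually.of_forall fun x => ?_)
        show ∑ i, φ x * pd i (fun y => u y i) x = φ x * divv u x
        rw [← Finset.mul_sum, divv_eq hu]

lemma matdiv_term {u : Vec d → Vec d} (hu : ContDiff ℝ (⊤ : ℕ∞) u) (hus : HasCompactSupport u)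
    {eta : Vec d → ℝ} (heta : ContDiff ℝ (⊤ : ℕ∞) eta) :
    ∫ x : Vec d, dot (matdiv (fun y => eta y • (jac u y + (jac u y)ᵀ)) x) (u x)
      = -(1/2) * ∫ x : Vec d, eta x * frob2 (jac u x + (jac u x)ᵀ) := by
  set f : Fin d → Fin d → Vec d → ℝ :=
    fun i k y => eta y * (jac u y i k + jac u y k i) with hf
  have hentry : ∀ i k : Fin d,
      (fun y => (eta y • (jac u y + (jac u y)ᵀ)) i k) = f i k := by
    intro i k; funext y
    simp [hf, Matrix.smul_apply, Matrix.add_apply, Matrix.transpose_apply]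
  have hfc : ∀ i k, ContDiff ℝ (⊤ : ℕ∞) (f i k) := fun i k =>
    heta.mul ((jac_entry_contDiff hu i k).add (jac_entry_contDiff hu k i))
  have hfs : ∀ i k, HasCompactSupport (f i k) := fun i k =>
    HasCompactSupport.mul_left ((jac_entry_hcs hus i k).add (jac_entry_hcs hus k i))
  have hint1 : ∀ i k : Fin d, Integrable (fun x : Vec d => pd k (f i k) x * u x i) :=
    fun i k => integ ((pd_contDiff (hfc i k) k).continuous.mul
      (comp_contDiff hu i).continuous) ((pd_hcs (hfs i k) k).mul_right)
  have hint2 : ∀ i k : Fin d,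
      Integrable (fun x : Vec d => f i k x * pd k (fun y => u y i) x) :=
    fun i k => integ ((hfc i k).continuous.mul
      (pd_contDiff (comp_contDiff hu i) k).continuous) (hfs i k).mul_right
  have step0 : ∀ x : Vec d, dot (matdiv (fun y => eta y • (jac u y + (jac u y)ᵀ)) x) (u x)
      = ∑ i, ∑ k, pd k (f i k) x * u x i := by
    intro x
    show ∑ i, (∑ k, fderiv ℝ (fun y => (eta y • (jac u y + (jac u y)ᵀ)) i k) x
        (Pi.single k 1)) * u x i = _
    refine Finset.sum_congr rfl fun i _ => ?_
    rw [Finset.sum_mul]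
    refine Finset.sum_congr rfl fun k _ => ?_
    rw [hentry i k]; rfl
  calc ∫ x : Vec d, dot (matdiv (fun y => eta y • (jac u y + (jac u y)ᵀ)) x) (u x)
      = ∫ x : Vec d, ∑ i, ∑ k, pd k (f i k) x * u x i :=
        integral_congr_ae (Filter.Eventually.of_forall step0)
    _ = ∑ i, ∑ k, ∫ x : Vec d, pd k (f i k) x * u x i := by
        rw [integral_finset_sum _ (fun i _ => (integrable_finset_sum _ (fun k _ => hint1 i k)))]
        exact Finset.sum_congr rfl fun i _ => integral_finset_sum _ (fun k _ => hint1 i k)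
    _ = ∑ i, ∑ k, -∫ x : Vec d, f i k x * pd k (fun y => u y i) x := by
        refine Finset.sum_congr rfl fun i _ => Finset.sum_congr rfl fun k _ => ?_
        have h := ibp (hfc i k) (comp_contDiff hu i) (hfs i k) k
        linarith
    _ = -∫ x : Vec d, ∑ i, ∑ k, f i k x * pd k (fun y => u y i) x := by
        rw [integral_finset_sum _ (fun i _ => (integrable_finset_sum _ (fun k _ => hint2 i k))),
          ← Finset.sum_neg_distrib]
        refine Finset.sum_congr rfl fun i _ => ?_
        rw [integral_finset_sum _ (fun k _ => hint2 i k), ← Finset.sum_neg_distrib]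
    _ = -(1/2) * ∫ x : Vec d, eta x * frob2 (jac u x + (jac u x)ᵀ) := by
        rw [neg_mul, show (1/2 : ℝ) * ∫ x : Vec d, eta x * frob2 (jac u x + (jac u x)ᵀ)
            = ∫ x : Vec d, (1/2) * (eta x * frob2 (jac u x + (jac u x)ᵀ))
          from (integral_const_mul _ _).symm]
        rw [← integral_neg, ← integral_neg]
        refine integral_congr_ae (Filter.Eventually.of_forall fun x => ?_)
        show -∑ i, ∑ k, f i k x * pd k (fun y => u y i) x
          = -((1/2) * (eta x * frob2 (jac u x + (jac u x)ᵀ)))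
        congr 1
        have hJ : ∀ i k : Fin d, pd k (fun y => u y i) x = jac u x i k :=
          fun i k => (jac_eq hu x i k).symm
        have e1 : ∑ i, ∑ k, f i k x * pd k (fun y => u y i) x
            = eta x * ∑ i, ∑ k, (jac u x i k + jac u x k i) * jac u x i k := by
          rw [Finset.mul_sum]
          refine Finset.sum_congr rfl fun i _ => ?_
          rw [Finset.mul_sum]
          refine Finset.sum_congr rfl fun k _ => ?_
          rw [hJ i k, hf]; ring
        have e2 : frob2 (jac u x + (jac u x)ᵀ)
            = ∑ i, ∑ k, (jac u x i k + jac u x k i)^2 := by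
          refine Finset.sum_congr rfl fun i _ => Finset.sum_congr rfl fun k _ => ?_
          simp [frob2, Matrix.add_apply, Matrix.transpose_apply]
        rw [e1, e2, frob_sym]; ring

lemma conv_term {u : Vec d → Vec d} (hu : ContDiff ℝ (⊤ : ℕ∞) u) (hus : HasCompactSupport u)
    {G : Vec d → Vec d} (hG : ContDiff ℝ (⊤ : ℕ∞) G) (hGs : HasCompactSupport G) :
    ∫ x : Vec d, dot ((jac u x).mulVec (G x)) (u x)
      = -(1/2) * ∫ x : Vec d, divv G x * dot (u x) (u x) := by
  set q : Vec d → ℝ := fun y => dot (u y) (u y) with hq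
  have hqc : ContDiff ℝ (⊤ : ℕ∞) q :=
    ContDiff.sum fun i _ => (comp_contDiff hu i).mul (comp_contDiff hu i)
  have hqs : HasCompactSupport q :=
    hcs_sum Finset.univ _ fun i _ => (comp_hcs hus i).mul_right
  have step0 : ∀ x : Vec d, dot ((jac u x).mulVec (G x)) (u x)
      = ∑ k, (1/2) * (G x k * pd k q x) := by
    intro x
    have e1 : dot ((jac u x).mulVec (G x)) (u x)
        = ∑ i, ∑ k, jac u x i k * G x k * u x i := by
      refine Finset.sum_congr rfl fun i _ => ?_
      show (∑ k, jac u x i k * G x k) * u x i = _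
      rw [Finset.sum_mul]
    rw [e1, Finset.sum_comm]
    refine Finset.sum_congr rfl fun k _ => ?_
    rw [pd_dot_self hu k x, Finset.mul_sum, Finset.mul_sum]
    refine Finset.sum_congr rfl fun i _ => ?_
    rw [← jac_eq hu x i k]; ring
  have hint1 : ∀ k : Fin d, Integrable (fun x : Vec d => G x k * pd k q x) :=
    fun k => integ ((comp_contDiff hG k).continuous.mul (pd_contDiff hqc k).continuous)
      (comp_hcs hGs k).mul_right
  have hint2 : ∀ k : Fin d,
      Integrable (fun x : Vec d => pd k (fun y => G y k) x * q x) :=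
    fun k => integ ((pd_contDiff (comp_contDiff hG k) k).continuous.mul hqc.continuous)
      (pd_hcs (comp_hcs hGs k) k).mul_right
  calc ∫ x : Vec d, dot ((jac u x).mulVec (G x)) (u x)
      = ∫ x : Vec d, ∑ k, (1/2) * (G x k * pd k q x) :=
        integral_congr_ae (Filter.Eventually.of_forall step0)
    _ = ∑ k, (1/2) * ∫ x : Vec d, G x k * pd k q x := by
        rw [integral_finset_sum _ (fun k _ => (hint1 k).const_mul _)]
        exact Finset.sum_congr rfl fun k _ => integral_const_mul _ _
    _ = ∑ k, (1/2) * -∫ x : Vec d, pd k (fun y => G y k) x * q x := by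
        refine Finset.sum_congr rfl fun k _ => ?_
        rw [ibp (comp_contDiff hG k) hqc (comp_hcs hGs k) k]
    _ = -(1/2) * ∫ x : Vec d, divv G x * q x := by
        have : ∀ k : Fin d, (1/2 : ℝ) * -∫ x : Vec d, pd k (fun y => G y k) x * q x
            = -(1/2) * ∫ x : Vec d, pd k (fun y => G y k) x * q x := fun k => by ring
        simp only [this]
        rw [← Finset.mul_sum, ← integral_finset_sum _ (fun k _ => hint2 k)]
        congr 1
        refine integral_congr_ae (Filter.Eventually.of_forall fun x => ?_)
        show ∑ k, pd k (fun y => G y k) x * q x = divv G x * q x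
        rw [← Finset.sum_mul, divv_eq hG]

lemma cont_dot {a b : Vec d → Vec d} (ha : Continuous a) (hb : Continuous b) :
    Continuous fun x => dot (a x) (b x) :=
  continuous_finset_sum _ fun i _ => ((continuous_apply i).comp ha).mul
    ((continuous_apply i).comp hb)

lemma dot_add_left (a b c : Vec d) : dot (a + b) c = dot a c + dot b c := by
  simp [dot, add_mul, Finset.sum_add_distrib]

lemma dot_smul_left (r : ℝ) (a c : Vec d) : dot (r • a) c = r * dot a c := by
  simp [dot, Finset.mul_sum, mul_assoc]

lemma dot_sub_left (a b c : Vec d) : dot (a - b) c = dot a c - dot b c := by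
  simp [dot, sub_mul, Finset.sum_sub_distrib]

lemma dot_comm (a b : Vec d) : dot a b = dot b a := by
  simp [dot, mul_comm]

lemma dot_self_nonneg (a : Vec d) : 0 ≤ dot a a :=
  Finset.sum_nonneg fun i _ => mul_self_nonneg _

lemma grad_term_integrable {u : Vec d → Vec d} (hu : ContDiff ℝ (⊤ : ℕ∞) u)
    {φ : Vec d → ℝ} (hφ : ContDiff ℝ (⊤ : ℕ∞) φ) (hφs : HasCompactSupport φ) :
    Integrable (fun x : Vec d => dot (gradf φ x) (u x)) := by
  refine integ ?_ ?_
  · exact continuous_finset_sum _ fun i _ => (pd_contDiff hφ i).continuous.mul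
      ((continuous_apply i).comp hu.continuous)
  · exact hcs_sum Finset.univ (fun i x => pd i φ x * u x i)
      fun i _ => (pd_hcs hφs i).mul_right

lemma conv_term_integrable {u : Vec d → Vec d} (hu : ContDiff ℝ (⊤ : ℕ∞) u)
    (hus : HasCompactSupport u)
    {G : Vec d → Vec d} (hG : ContDiff ℝ (⊤ : ℕ∞) G) (hGs : HasCompactSupport G) :
    Integrable (fun x : Vec d => dot ((jac u x).mulVec (G x)) (u x)) := by
  refine integ ?_ ?_
  · show Continuous fun x : Vec d => ∑ i, (∑ k, jac u x i k * G x k) * u x i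
    exact continuous_finset_sum _ fun i _ =>
      ((continuous_finset_sum _ fun k _ => (jac_entry_contDiff hu i k).continuous.mul
        ((continuous_apply k).comp hG.continuous))).mul
        ((continuous_apply i).comp hu.continuous)
  · exact hcs_sum Finset.univ (fun i x => (∑ k, jac u x i k * G x k) * u x i)
      fun i _ => HasCompactSupport.mul_left (comp_hcs hus i)

lemma matdiv_term_integrable {u : Vec d → Vec d} (hu : ContDiff ℝ (⊤ : ℕ∞) u)
    (hus : HasCompactSupport u)
    {eta : Vec d → ℝ} (heta : ContDiff ℝ (⊤ : ℕ∞) eta) :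
    Integrable (fun x : Vec d =>
      dot (matdiv (fun y => eta y • (jac u y + (jac u y)ᵀ)) x) (u x)) := by
  set f : Fin d → Fin d → Vec d → ℝ :=
    fun i k y => eta y * (jac u y i k + jac u y k i) with hf
  have hentry : ∀ i k : Fin d,
      (fun y => (eta y • (jac u y + (jac u y)ᵀ)) i k) = f i k := by
    intro i k; funext y
    simp [hf, Matrix.smul_apply, Matrix.add_apply, Matrix.transpose_apply]
  have hfc : ∀ i k, ContDiff ℝ (⊤ : ℕ∞) (f i k) := fun i k =>
    heta.mul ((jac_entry_contDiff hu i k).add (jac_entry_contDiff hu k i))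
  have hfs : ∀ i k, HasCompactSupport (f i k) := fun i k =>
    HasCompactSupport.mul_left ((jac_entry_hcs hus i k).add (jac_entry_hcs hus k i))
  have heq : (fun x : Vec d =>
      dot (matdiv (fun y => eta y • (jac u y + (jac u y)ᵀ)) x) (u x))
      = fun x => ∑ i, (∑ k, pd k (f i k) x) * u x i := by
    funext x
    refine Finset.sum_congr rfl fun i _ => ?_
    congr 1
  rw [heq]
  refine integ ?_ ?_
  · exact continuous_finset_sum _ fun i _ =>
      (continuous_finset_sum _ fun k _ => (pd_contDiff (hfc i k) k).continuous).mul
        ((continuous_apply i).comp hu.continuous)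
  · exact hcs_sum Finset.univ (fun i x => (∑ k, pd k (f i k) x) * u x i)
      fun i _ => HasCompactSupport.mul_left (comp_hcs hus i)

lemma dot_sub_self (a b : Vec d) :
    dot (a - b) (a - b) = dot a a - 2 * dot a b + dot b b := by
  show (∑ i, (a i - b i) * (a i - b i)) = _
  have h : ∀ i ∈ Finset.univ, (a i - b i) * (a i - b i)
      = a i * a i - (a i * b i + a i * b i) + b i * b i := fun i _ => by ring
  rw [Finset.sum_congr rfl h, Finset.sum_add_distrib, Finset.sum_sub_distrib,
    Finset.sum_add_distrib]
  show _ = dot a a - 2 * dot a b + dot b b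
  simp only [dot]; ring


/-- kinetic-energy dissipation of the discrete momentum step
(inequalities (3.17)–(3.21) combined).  If `ρ' − ρ = −δt ∇·G` and
`ρ (u − v)/δt + (G·∇)u = ∇(λ ∇·u) + ∇·(η(∇u + (∇u)ᵀ))`, then
`½ ∫ ρ' |u|² − ½ ∫ ρ |v|² ≤ −δt ∫ λ (∇·u)² − (δt/2) ∫ η ‖∇u + (∇u)ᵀ‖_F²`. -/
theorem momentum_step_kinetic_dissipation {d : ℕ} (hd : 1 ≤ d)
    (δt : ℝ) (hδt : 0 < δt)
    (ρ ρ' : Vec d → ℝ)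
    (hρ_smooth : ContDiff ℝ (⊤ : ℕ∞) ρ) (hρ'_smooth : ContDiff ℝ (⊤ : ℕ∞) ρ')
    (hρ_supp : HasCompactSupport ρ) (hρ'_supp : HasCompactSupport ρ')
    (hρ_nonneg : ∀ x, 0 ≤ ρ x) (hρ'_nonneg : ∀ x, 0 ≤ ρ' x)
    (G : Vec d → Vec d) (hG_smooth : ContDiff ℝ (⊤ : ℕ∞) G) (hG_supp : HasCompactSupport G)
    (hmass : ∀ x, ρ' x - ρ x = -(δt * divv G x))
    (u : Vec d → Vec d) (hu_smooth : ContDiff ℝ (⊤ : ℕ∞) u) (hu_supp : HasCompactSupport u)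
    (v : Vec d → Vec d) (hv_smooth : ContDiff ℝ (⊤ : ℕ∞) v)
    (lam eta : Vec d → ℝ) (hlam_smooth : ContDiff ℝ (⊤ : ℕ∞) lam) (heta_smooth : ContDiff ℝ (⊤ : ℕ∞) eta)
    (hlam_nonneg : ∀ x, 0 ≤ lam x) (heta_nonneg : ∀ x, 0 ≤ eta x)
    (hmom : ∀ x, δt⁻¹ • (ρ x • (u x - v x)) + (jac u x).mulVec (G x)
        = gradf (fun y => lam y * divv u y) x
          + matdiv (fun y => eta y • (jac u y + (jac u y)ᵀ)) x) :
    (1/2) * (∫ x : Vec d, ρ' x * dot (u x) (u x))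
      - (1/2) * (∫ x : Vec d, ρ x * dot (v x) (v x))
      ≤ -(δt * ∫ x : Vec d, lam x * (divv u x)^2)
        - (δt/2) * ∫ x : Vec d, eta x * frob2 (jac u x + (jac u x)ᵀ) := by
  have hδne : δt ≠ 0 := ne_of_gt hδt
  set φ : Vec d → ℝ := fun y => lam y * divv u y with hφ
  have hφc : ContDiff ℝ (⊤ : ℕ∞) φ := hlam_smooth.mul (divv_contDiff hu_smooth)
  have hφs : HasCompactSupport φ := HasCompactSupport.mul_left (divv_hcs hu_supp)
  set E1 := ∫ x : Vec d, ρ x * dot (u x) (u x) with hE1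
  set E2 := ∫ x : Vec d, ρ x * dot (u x) (v x) with hE2
  set E3 := ∫ x : Vec d, ρ' x * dot (u x) (u x) with hE3
  set E4 := ∫ x : Vec d, ρ x * dot (v x) (v x) with hE4
  set L := ∫ x : Vec d, lam x * (divv u x)^2 with hL
  set Eh := ∫ x : Vec d, eta x * frob2 (jac u x + (jac u x)ᵀ) with hEh
  -- integrability of the basic energy integrands
  have int1 : Integrable (fun x : Vec d => ρ x * dot (u x) (u x)) :=
    integ (hρ_smooth.continuous.mul (cont_dot hu_smooth.continuous hu_smooth.continuous))
      hρ_supp.mul_right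
  have int2 : Integrable (fun x : Vec d => ρ x * dot (u x) (v x)) :=
    integ (hρ_smooth.continuous.mul (cont_dot hu_smooth.continuous hv_smooth.continuous))
      hρ_supp.mul_right
  have int3 : Integrable (fun x : Vec d => ρ' x * dot (u x) (u x)) :=
    integ (hρ'_smooth.continuous.mul (cont_dot hu_smooth.continuous hu_smooth.continuous))
      hρ'_supp.mul_right
  have int4 : Integrable (fun x : Vec d => ρ x * dot (v x) (v x)) :=
    integ (hρ_smooth.continuous.mul (cont_dot hv_smooth.continuous hv_smooth.continuous))
      hρ_supp.mul_right
  -- step (5): ∫ ρ |u-v|² ≥ 0, i.e. E1 - 2 E2 + E4 ≥ 0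
  have hD : (0:ℝ) ≤ E1 - 2*E2 + E4 := by
    have hexp : ∀ x : Vec d, ρ x * dot (u x - v x) (u x - v x)
        = ρ x * dot (u x) (u x) - 2 * (ρ x * dot (u x) (v x)) + ρ x * dot (v x) (v x) := by
      intro x
      rw [dot_sub_self]
      ring
    have h0 : (0:ℝ) ≤ ∫ x : Vec d, ρ x * dot (u x - v x) (u x - v x) :=
      integral_nonneg fun x => mul_nonneg (hρ_nonneg x) (dot_self_nonneg _)
    have heq : ∫ x : Vec d, ρ x * dot (u x - v x) (u x - v x) = E1 - 2*E2 + E4 := by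
      rw [show (fun x : Vec d => ρ x * dot (u x - v x) (u x - v x))
          = fun x => ρ x * dot (u x) (u x) - 2 * (ρ x * dot (u x) (v x))
            + ρ x * dot (v x) (v x) from funext hexp]
      have intA : Integrable (fun x : Vec d =>
          ρ x * dot (u x) (u x) - 2 * (ρ x * dot (u x) (v x))) := int1.sub (int2.const_mul 2)
      have intB : Integrable (fun x : Vec d => 2 * (ρ x * dot (u x) (v x))) :=
        int2.const_mul 2
      rw [integral_add intA int4, integral_sub int1 intB, integral_const_mul, hE1, hE2, hE4]
    linarith [heq ▸ h0]
  -- the three integration-by-parts identities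
  have hA : ∫ x : Vec d, dot (gradf φ x) (u x) = -L := by
    rw [grad_term hu_smooth hφc hφs, hL]
    congr 1
    refine integral_congr_ae (Filter.Eventually.of_forall fun x => ?_)
    show φ x * divv u x = lam x * (divv u x)^2
    rw [hφ]; ring
  have hB : ∫ x : Vec d, dot (matdiv (fun y => eta y • (jac u y + (jac u y)ᵀ)) x) (u x)
      = -(1/2) * Eh := matdiv_term hu_smooth hu_supp heta_smooth
  have hC : ∫ x : Vec d, dot ((jac u x).mulVec (G x)) (u x)
      = -(1/2) * (δt⁻¹ * E1 - δt⁻¹ * E3) := by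
    rw [conv_term hu_smooth hu_supp hG_smooth hG_supp]
    congr 1
    have hdg : ∀ x : Vec d, divv G x * dot (u x) (u x)
        = δt⁻¹ * (ρ x * dot (u x) (u x)) - δt⁻¹ * (ρ' x * dot (u x) (u x)) := by
      intro x
      have hm := hmass x
      have : divv G x = δt⁻¹ * (ρ x - ρ' x) := by
        field_simp
        linarith
      rw [this]; ring
    rw [show (fun x : Vec d => divv G x * dot (u x) (u x))
        = fun x => δt⁻¹ * (ρ x * dot (u x) (u x)) - δt⁻¹ * (ρ' x * dot (u x) (u x))
      from funext hdg]
    have i1 : Integrable (fun x : Vec d => δt⁻¹ * (ρ x * dot (u x) (u x))) :=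
      int1.const_mul _
    have i3 : Integrable (fun x : Vec d => δt⁻¹ * (ρ' x * dot (u x) (u x))) :=
      int3.const_mul _
    rw [integral_sub i1 i3, integral_const_mul, integral_const_mul, hE1, hE3]
  -- integrate the momentum equation dotted with u
  have hpt : ∀ x : Vec d,
      (δt⁻¹ * (ρ x * dot (u x) (u x)) - δt⁻¹ * (ρ x * dot (u x) (v x)))
        + dot ((jac u x).mulVec (G x)) (u x)
      = dot (gradf φ x) (u x)
        + dot (matdiv (fun y => eta y • (jac u y + (jac u y)ᵀ)) x) (u x) := by
    intro x
    have h2 : dot (δt⁻¹ • (ρ x • (u x - v x)) + (jac u x).mulVec (G x)) (u x)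
        = dot (gradf φ x + matdiv (fun y => eta y • (jac u y + (jac u y)ᵀ)) x) (u x) := by
      rw [hmom x]
    rw [dot_add_left, dot_add_left, dot_smul_left, dot_smul_left, dot_sub_left,
      dot_comm (v x) (u x)] at h2
    have h3 : δt⁻¹ * (ρ x * (dot (u x) (u x) - dot (u x) (v x)))
        = δt⁻¹ * (ρ x * dot (u x) (u x)) - δt⁻¹ * (ρ x * dot (u x) (v x)) := by ring
    linarith [h2, h3]
  have hsum : (δt⁻¹ * E1 - δt⁻¹ * E2) + -(1/2) * (δt⁻¹ * E1 - δt⁻¹ * E3)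
      = -L + -(1/2) * Eh := by
    have hI := integral_congr_ae (μ := (volume : Measure (Vec d)))
      (Filter.Eventually.of_forall hpt)
    have j1 : Integrable (fun x : Vec d => δt⁻¹ * (ρ x * dot (u x) (u x))) :=
      int1.const_mul _
    have j2 : Integrable (fun x : Vec d => δt⁻¹ * (ρ x * dot (u x) (v x))) :=
      int2.const_mul _
    have jT : Integrable (fun x : Vec d =>
        δt⁻¹ * (ρ x * dot (u x) (u x)) - δt⁻¹ * (ρ x * dot (u x) (v x))) := j1.sub j2
    rw [integral_add jT (conv_term_integrable hu_smooth hu_supp hG_smooth hG_supp),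
      integral_add (grad_term_integrable hu_smooth hφc hφs)
        (matdiv_term_integrable hu_smooth hu_supp heta_smooth),
      integral_sub j1 j2,
      integral_const_mul, integral_const_mul, hA, hB, hC, ← hE1, ← hE2] at hI
    linarith [hI]
  -- conclude
  have key : -(δt * L) - (δt/2) * Eh = E1 - E2 - (1/2)*E1 + (1/2)*E3 := by
    have h5 : -(δt * L) - (δt/2) * Eh = δt * (-L + -(1/2) * Eh) := by ring
    rw [h5, ← hsum]
    field_simp
    ring
  linarith [hD, key]


end
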